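/- arXiv:cs/0207093 — 6 statements merged into one kernel-verified Lean document; each statement's English description precedes it below -/
import Mathlib

section
/- If ≻₁ and ≻₂ are strict partial orders on U and for all sets r, winnow(≻₂, r) ⊆ winnow(≻₁, r), then ≻₁ is contained in ≻₂ (for all t₁ t₂, t₁ ≻₁ t₂ implies t₁ ≻₂ t₂). -/
def winnow {U : Type*} (p : U → U → Prop) (r : Set U) : Set U :=
  {t ∈ r | ¬ ∃ t' ∈ r, p t' t}

theorem stmt_2 {U : Type*} (p₁ p₂ : U → U → Prop)
    (hirr₁ : ∀ x, ¬ p₁ x x) (htrans₁ : ∀ x y z, p₁ x y → p₁ y z → p₁ x z)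
    (hirr₂ : ∀ x, ¬ p₂ x x) (htrans₂ : ∀ x y z, p₂ x y → p₂ y z → p₂ x z)
    (h : ∀ r : Set U, winnow p₂ r ⊆ winnow p₁ r) :
    ∀ t₁ t₂, p₁ t₁ t₂ → p₂ t₁ t₂ := by
  intro t₁ t₂ h1
  by_contra h2
  have ht : t₂ ∈ winnow p₂ ({t₁, t₂} : Set U) := by
    constructor
    · simp
    · rintro ⟨t', ht', hp⟩
      rcases ht' with rfl | rfl
      · exact h2 hp
      · exact hirr₂ _ hp
  have := h _ ht
  exact this.2 ⟨t₁, by simp, h1⟩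
end

section
/- If ≻₁ and ≻₂ are strict partial orders on U with ≻₁ ⊆ ≻₂ (i.e., t₁ ≻₁ t₂ implies t₁ ≻₂ t₂), then for every finite set r, winnow(≻₁, winnow(≻₂, r)) = winnow(≻₂, r). -/
theorem stmt_6 {U : Type*} (p₁ p₂ : U → U → Prop)
    (hirr₁ : ∀ x, ¬ p₁ x x) (htrans₁ : ∀ x y z, p₁ x y → p₁ y z → p₁ x z)
    (hirr₂ : ∀ x, ¬ p₂ x x) (htrans₂ : ∀ x y z, p₂ x y → p₂ y z → p₂ x z)
    (hsub : ∀ t₁ t₂, p₁ t₁ t₂ → p₂ t₁ t₂)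
    (r : Set U) (hfin : r.Finite) :
    winnow p₁ (winnow p₂ r) = winnow p₂ r := by
  ext t
  simp only [winnow, Set.mem_setOf_eq]
  constructor
  · rintro ⟨ht, -⟩; exact ht
  · rintro ⟨ht, hnd⟩
    refine ⟨⟨ht, hnd⟩, ?_⟩
    rintro ⟨t', ⟨⟨ht', -⟩, h1⟩⟩
    exact hnd ⟨t', ht', hsub _ _ h1⟩
end

section
/- If ≻₁ and ≻₂ are strict partial orders on U with ≻₁ ⊆ ≻₂, then for every finite set r, winnow(≻₂, winnow(≻₁, r)) = winnow(≻₂, r). -/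
section

variable {U : Type*} {p q : U → U → Prop} {r s : Set U}

theorem winnow_subset (p : U → U → Prop) (r : Set U) : winnow p r ⊆ r := fun _ ht => ht.1

theorem winnow_subset_winnow_of_imp (hpq : ∀ x y, p x y → q x y) : winnow q r ⊆ winnow p r :=
  fun _ ⟨htr, hmax⟩ => ⟨htr, fun ⟨t', ht'r, ht'⟩ => hmax ⟨t', ht'r, hpq _ _ ht'⟩⟩

theorem exists_mem_winnow_of_rel [IsStrictOrder U p] (hr : r.Finite) {t t' : U} (ht' : t' ∈ r)
    (h : p t' t) : ∃ m ∈ winnow p r, p m t := by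
  have hwf : WellFounded fun a b : r => p a b := hr.wellFoundedOn
  obtain ⟨⟨m, hmr⟩, hmt, hmax⟩ := hwf.has_min {x : r | p x t} ⟨⟨t', ht'⟩, h⟩
  refine ⟨m, ⟨hmr, ?_⟩, hmt⟩
  rintro ⟨y, hyr, hym⟩
  exact hmax ⟨y, hyr⟩ (_root_.trans hym hmt) hym

theorem winnow_eq_of_winnow_subset_of_subset [IsStrictOrder U p] (hr : r.Finite)
    (hps : winnow p r ⊆ s) (hsr : s ⊆ r) : winnow p s = winnow p r := by
  ext t
  refine ⟨fun ⟨hts, hmax⟩ => ⟨hsr hts, fun ⟨t', ht'r, ht'⟩ => ?_⟩,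
    fun ht => ⟨hps ht, fun ⟨t', ht's, ht'⟩ => ht.2 ⟨t', hsr ht's, ht'⟩⟩⟩
  obtain ⟨m, hm, hmt⟩ := exists_mem_winnow_of_rel hr ht'r ht'
  exact hmax ⟨m, hps hm, hmt⟩

end

theorem stmt_7_general {U : Type*} (p₁ p₂ : U → U → Prop)
    (hirr₂ : ∀ x, ¬ p₂ x x) (htrans₂ : ∀ x y z, p₂ x y → p₂ y z → p₂ x z)
    (hsub : ∀ t₁ t₂, p₁ t₁ t₂ → p₂ t₁ t₂)
    (r : Set U) (hfin : r.Finite) :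
    winnow p₂ (winnow p₁ r) = winnow p₂ r :=
  have : IsStrictOrder U p₂ := { irrefl := hirr₂, trans := htrans₂ }
  winnow_eq_of_winnow_subset_of_subset hfin (winnow_subset_winnow_of_imp hsub) (winnow_subset p₁ r)

theorem stmt_7 {U : Type*} (p₁ p₂ : U → U → Prop)
    (hirr₁ : ∀ x, ¬ p₁ x x) (htrans₁ : ∀ x y z, p₁ x y → p₁ y z → p₁ x z)
    (hirr₂ : ∀ x, ¬ p₂ x x) (htrans₂ : ∀ x y z, p₂ x y → p₂ y z → p₂ x z)
    (hsub : ∀ t₁ t₂, p₁ t₁ t₂ → p₂ t₁ t₂)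
    (r : Set U) (hfin : r.Finite) :
    winnow p₂ (winnow p₁ r) = winnow p₂ r :=
  stmt_7_general p₁ p₂ hirr₂ htrans₂ hsub r hfin
end

section
/- Let P be a predicate on U and ≻ a binary relation on U such that for all t₁ t₂, if P(t₂) and t₁ ≻ t₂ then P(t₁). Then for every set r, {t ∈ winnow(≻, r) | P(t)} = winnow(≻, {t ∈ r | P(t)}). -/
theorem stmt_8 {U : Type*} (P : U → Prop) (p : U → U → Prop)
    (h : ∀ t₁ t₂, P t₂ → p t₁ t₂ → P t₁) (r : Set U) :
    {t ∈ winnow p r | P t} = winnow p {t ∈ r | P t} := by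
  ext t
  constructor
  · rintro ⟨⟨htr, hno⟩, hP⟩
    exact ⟨⟨htr, hP⟩, fun ⟨t', ⟨ht'r, _⟩, hpt'⟩ => hno ⟨t', ht'r, hpt'⟩⟩
  · rintro ⟨⟨htr, hP⟩, hno⟩
    exact ⟨⟨htr, fun ⟨t', ht'r, hpt'⟩ => hno ⟨t', ⟨ht'r, h t' t hP hpt'⟩, hpt'⟩⟩, hP⟩
end

section
/- Let ≻ be an irreflexive binary relation on U and P a predicate on U. If for every set r, {t ∈ winnow(≻, r) | P(t)} = winnow(≻, {t ∈ r | P(t)}), then for all t₁ t₂, P(t₂) and t₁ ≻ t₂ imply P(t₁). -/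
theorem stmt_9 {U : Type*} (p : U → U → Prop) (P : U → Prop)
    (hirr : ∀ x, ¬ p x x)
    (h : ∀ r : Set U, {t ∈ winnow p r | P t} = winnow p {t ∈ r | P t}) :
    ∀ t₁ t₂, P t₂ → p t₁ t₂ → P t₁ := by
  intro t₁ t₂ hP hp
  by_contra hnP
  have hr := h {t₁, t₂}
  have h2 : t₂ ∈ winnow p {t ∈ ({t₁, t₂} : Set U) | P t} := by
    constructor
    · exact ⟨Or.inr rfl, hP⟩
    · rintro ⟨t', ⟨ht', hPt'⟩, hpt'⟩
      rcases ht' with rfl | rfl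
      · exact hnP hPt'
      · exact hirr t' hpt'
  rw [← hr] at h2
  exact h2.1.2 ⟨t₁, Or.inl rfl, hp⟩
end

section
/- Let ≻₁ be a relation on U₁ and ≻₂ a relation on U₂, and let ≻₀ be the Pareto composition on U₁ × U₂ defined by (t₁,t₂) ≻₀ (t₁',t₂') iff (t₁ ≻₁ t₁' ∨ t₁ = t₁') ∧ (t₂ ≻₂ t₂' ∨ t₂ = t₂') ∧ (t₁ ≻₁ t₁' ∨ t₂ ≻₂ t₂'). Then for all sets r₁ ⊆ U₁ and r₂ ⊆ U₂, winnow(≻₀, r₁ × r₂) = winnow(≻₁, r₁) × winnow(≻₂, r₂). -/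
theorem stmt_10 {U₁ U₂ : Type*} (p₁ : U₁ → U₁ → Prop) (p₂ : U₂ → U₂ → Prop)
    (r₁ : Set U₁) (r₂ : Set U₂) :
    winnow (fun (s t : U₁ × U₂) =>
        (p₁ s.1 t.1 ∨ s.1 = t.1) ∧ (p₂ s.2 t.2 ∨ s.2 = t.2) ∧
        (p₁ s.1 t.1 ∨ p₂ s.2 t.2)) (r₁ ×ˢ r₂) =
      (winnow p₁ r₁) ×ˢ (winnow p₂ r₂) := by
  ext ⟨t₁, t₂⟩
  simp only [winnow, Set.mem_setOf_eq, Set.mem_prod, Set.prodMk_mem_set_prod_eq]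
  constructor
  · rintro ⟨⟨h1, h2⟩, hn⟩
    refine ⟨⟨h1, fun ⟨s₁, hs₁, hp⟩ => ?_⟩, h2, fun ⟨s₂, hs₂, hp⟩ => ?_⟩
    · exact hn ⟨(s₁, t₂), ⟨hs₁, h2⟩, Or.inl hp, Or.inr rfl, Or.inl hp⟩
    · exact hn ⟨(t₁, s₂), ⟨h1, hs₂⟩, Or.inr rfl, Or.inl hp, Or.inr hp⟩
  · rintro ⟨⟨h1, hn1⟩, h2, hn2⟩
    refine ⟨⟨h1, h2⟩, ?_⟩
    rintro ⟨⟨s₁, s₂⟩, ⟨hs₁, hs₂⟩, -, -, h | h⟩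
    · exact hn1 ⟨s₁, hs₁, h⟩
    · exact hn2 ⟨s₂, hs₂, h⟩
end
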